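/- Let I be a minimal normalized scheduling instance with ρ_I > 1. For every processor p with s(p) > 1/(ρ_I − 1) one has w'_I(p) > s(p); moreover, for every processor p with s(p) ≥ 1/(ρ_I − 1) one has w'_I(p) ≥ s(p). -/

import Mathlib

open Finset

/-- A scheduling instance on uniform processors: `m` processors with positive
speeds `s 1, …, s m`, and `n` tasks with positive sizes `t 1 ≥ … ≥ t n`
(tasks are given in non-increasing order of size, as assumed for LPT). -/
structure SchedInstance where
  m : ℕ
  n : ℕ
  s : ℕ → ℝ
  t : ℕ → ℝ
  hm : 1 ≤ m
  hn : 1 ≤ n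
  hs : ∀ p, 1 ≤ p → p ≤ m → 0 < s p
  ht : ∀ i, 1 ≤ i → i ≤ n → 0 < t i
  tsorted : ∀ i j, 1 ≤ i → i ≤ j → j ≤ n → t j ≤ t i

namespace SchedInstance

variable (I : SchedInstance)

/-- The set of processor indices `{1, …, m}`. -/
def procs : Finset ℕ := Finset.Icc 1 I.m

/-- The set of task indices `{1, …, n}`. -/
def tasks : Finset ℕ := Finset.Icc 1 I.n

lemma procs_nonempty : I.procs.Nonempty := Finset.nonempty_Icc.mpr I.hm

/-- A schedule assigns every task `i ∈ {1,…,n}` a processor `A i ∈ {1,…,m}`. -/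
def IsSchedule (A : ℕ → ℕ) : Prop := ∀ i ∈ I.tasks, A i ∈ I.procs

/-- Total size of the tasks assigned by `A` to processor `p`. -/
noncomputable def load (A : ℕ → ℕ) (p : ℕ) : ℝ :=
  ∑ i ∈ I.tasks.filter (fun i => A i = p), I.t i

/-- The makespan of a schedule `A` : the largest completion time
`(Σ_{A i = p} t i) / s p` over the processors `p`. -/
noncomputable def makespan (A : ℕ → ℕ) : ℝ :=
  I.procs.sup' I.procs_nonempty (fun p => I.load A p / I.s p)

/-- `OPT(I)`: the optimal (minimum) makespan over all schedules. -/
noncomputable def opt : ℝ := sInf {r | ∃ A, I.IsSchedule A ∧ I.makespan A = r}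

/-- The completion time of processor `p` if task `i` is added to it while the
current workloads are `w`. -/
noncomputable def cost (w : ℕ → ℝ) (i p : ℕ) : ℝ := (w p + I.t i) / I.s p

/-- The processor the LPT rule chooses for task `i` given current workloads `w` :
the smallest-index processor minimizing `(w p + t i) / s p`. -/
noncomputable def choose (w : ℕ → ℝ) (i : ℕ) : ℕ :=
  (I.procs.filter
    (fun p => I.cost w i p = I.procs.inf' I.procs_nonempty (I.cost w i))).min'
    (by
      obtain ⟨p, hp, hpe⟩ := Finset.exists_mem_eq_inf' I.procs_nonempty (I.cost w i)
      exact ⟨p, Finset.mem_filter.mpr ⟨hp, hpe.symm⟩⟩)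

/-- `lptW k p` : the workload of processor `p` after the LPT algorithm has
assigned tasks `1, …, k` (in this order). -/
noncomputable def lptW : ℕ → ℕ → ℝ
  | 0, _ => 0
  | (k + 1), p =>
      lptW k p + if I.choose (lptW k) (k + 1) = p ∧ k + 1 ≤ I.n then I.t (k + 1) else 0

/-- `A_I` : the LPT assignment; task `i` goes to the least-index processor
minimizing the resulting completion time, given the previous assignments. -/
noncomputable def lptA (i : ℕ) : ℕ := I.choose (I.lptW (i - 1)) i

/-- `LPT(I)` : the makespan of the LPT schedule. -/
noncomputable def lptTime : ℝ := I.makespan I.lptA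

/-- `ρ_I = LPT(I) / OPT(I)` : the approximation ratio of LPT on instance `I`. -/
noncomputable def ratio : ℝ := I.lptTime / I.opt

/-- `I` is normalized: `OPT(I) = 1`, speeds are non-increasing, and the
smallest task has size `t n = 1`. -/
def Normalized : Prop :=
  I.opt = 1 ∧ (∀ p q, 1 ≤ p → p ≤ q → q ≤ I.m → I.s q ≤ I.s p) ∧ I.t I.n = 1

/-- `I` is minimal: every strictly smaller instance has a strictly smaller
LPT approximation ratio. -/
def Minimal : Prop :=
  ∀ J : SchedInstance, J.m ≤ I.m → J.n ≤ I.n →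
    ¬(J.m = I.m ∧ J.n = I.n) → J.ratio < I.ratio

/-- `T_I(p)` : the tasks assigned to processor `p` by the LPT schedule. -/
noncomputable def T (p : ℕ) : Finset ℕ := I.tasks.filter (fun i => I.lptA i = p)

/-- `T'_I(p) = T_I(p) \ {n}` : the LPT tasks of `p`, without the last task. -/
noncomputable def T' (p : ℕ) : Finset ℕ := (I.T p).erase I.n

/-- `w'_I(p)` : the workload of `p` in the LPT schedule without the last task. -/
noncomputable def w' (p : ℕ) : ℝ := ∑ i ∈ I.T' p, I.t i

/-- `T*(p)` for a schedule `A` : the tasks assigned to processor `p` by `A`. -/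
noncomputable def Tstar (A : ℕ → ℕ) (p : ℕ) : Finset ℕ :=
  I.tasks.filter (fun i => A i = p)

/-- `w*(p)` for a schedule `A` : the workload of processor `p` under `A`. -/
noncomputable def wstar (A : ℕ → ℕ) (p : ℕ) : ℝ := ∑ i ∈ I.Tstar A p, I.t i

/-- `A` is an optimal schedule whose workloads satisfy `w*(1) ≥ … ≥ w*(m)`. -/
def IsSortedOptimal (A : ℕ → ℕ) : Prop :=
  I.IsSchedule A ∧ I.makespan A = I.opt ∧
    ∀ p q, 1 ≤ p → p ≤ q → q ≤ I.m → I.wstar A q ≤ I.wstar A p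

/-- Processor `p` dominates processor `q` (with respect to the optimal
schedule `A`): `s p ≤ s q` and there is `f : T*(q) → T'(p)` with
`t i ≥ Σ_{f j = i} t j` for every `i ∈ T'(p)`. -/
def Dominates (A : ℕ → ℕ) (p q : ℕ) : Prop :=
  I.s p ≤ I.s q ∧ ∃ f : ℕ → ℕ,
    (∀ j ∈ I.Tstar A q, f j ∈ I.T' p) ∧
    ∀ i ∈ I.T' p, (∑ j ∈ (I.Tstar A q).filter (fun j => f j = i), I.t j) ≤ I.t i

end SchedInstance

/-- The polynomial `P_m(x) = 2x^m − x^{m−1} − ⋯ − x − 2`. -/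
noncomputable def Pm (m : ℕ) (x : ℝ) : ℝ := 2 * x ^ m - (∑ k ∈ Finset.Ico 1 m, x ^ k) - 2

/-!
Removing the last (smallest) task yields a smaller instance `J` whose LPT schedule is that of `I`
without the last task, so its workloads are the `w'_I(p)`. Since `OPT(J) ≤ OPT(I)`, minimality
forces `LPT(J) < LPT(I)` (for `n = 1` simply `w'_I = 0`). Hence every `w'_I(p) / s(p)` stays below
`LPT(I)`, the makespan of `I` is attained at the processor receiving the last task, and the greedy
choice of that processor gives `LPT(I) ≤ (w'_I(p) + t(n)) / s(p)` for every `p`. With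
`OPT(I) = t(n) = 1` this reads `ρ_I · s(p) ≤ w'_I(p) + 1`, and `(ρ_I − 1) · s(p) > 1` (resp. `≥ 1`)
turns it into `w'_I(p) > s(p)` (resp. `≥`).
-/

namespace SchedInstance

variable (I : SchedInstance)

lemma mem_procs {p : ℕ} : p ∈ I.procs ↔ 1 ≤ p ∧ p ≤ I.m := Finset.mem_Icc

lemma mem_tasks {i : ℕ} : i ∈ I.tasks ↔ 1 ≤ i ∧ i ≤ I.n := Finset.mem_Icc

lemma s_pos {p : ℕ} (hp : p ∈ I.procs) : 0 < I.s p :=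
  I.hs p (I.mem_procs.mp hp).1 (I.mem_procs.mp hp).2

lemma t_pos {i : ℕ} (hi : i ∈ I.tasks) : 0 < I.t i :=
  I.ht i (I.mem_tasks.mp hi).1 (I.mem_tasks.mp hi).2

lemma choose_spec (w : ℕ → ℝ) (i : ℕ) :
    I.choose w i ∈ I.procs ∧
      I.cost w i (I.choose w i) = I.procs.inf' I.procs_nonempty (I.cost w i) :=
  Finset.mem_filter.mp (Finset.min'_mem _ _)

lemma cost_choose_le (w : ℕ → ℝ) (i : ℕ) {p : ℕ} (hp : p ∈ I.procs) :
    I.cost w i (I.choose w i) ≤ I.cost w i p :=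
  (I.choose_spec w i).2.le.trans (Finset.inf'_le _ hp)

lemma lptW_succ (k p : ℕ) : I.lptW (k + 1) p = I.lptW k p +
    if I.choose (I.lptW k) (k + 1) = p ∧ k + 1 ≤ I.n then I.t (k + 1) else 0 := rfl

lemma lptA_succ (k : ℕ) : I.lptA (k + 1) = I.choose (I.lptW k) (k + 1) := rfl

lemma lptW_eq_sum (k p : ℕ) :
    I.lptW k p = ∑ i ∈ (Icc 1 (min k I.n)).filter (fun i => I.lptA i = p), I.t i := by
  induction k with
  | zero => simp [lptW]
  | succ k ih =>
    rw [I.lptW_succ, ih]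
    by_cases hk : k + 1 ≤ I.n
    · rw [min_eq_left hk, min_eq_left (by omega), sum_filter, sum_filter,
        sum_Icc_succ_top (by omega), I.lptA_succ]
      simp [hk]
    · rw [min_eq_right (by omega), min_eq_right (by omega)]
      simp [hk]

lemma load_lptA (p : ℕ) : I.load I.lptA p = I.lptW I.n p := by
  rw [I.lptW_eq_sum, min_self]
  rfl

lemma w'_eq_lptW (p : ℕ) : I.w' p = I.lptW (I.n - 1) p := by
  rw [I.lptW_eq_sum, min_eq_left (Nat.sub_le _ _)]
  unfold w' T' T tasks
  congr 1
  ext i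
  simp only [mem_erase, mem_filter, mem_Icc]
  have := I.hn
  omega

lemma load_lptA_eq_w'_add (p : ℕ) :
    I.load I.lptA p = I.w' p + if I.lptA I.n = p then I.t I.n else 0 := by
  obtain ⟨k, hk⟩ : ∃ k, I.n = k + 1 := ⟨I.n - 1, by have := I.hn; omega⟩
  have hlast : I.lptA I.n = I.choose (I.lptW k) (k + 1) := by rw [hk, lptA_succ]
  rw [I.load_lptA, I.w'_eq_lptW, hlast]
  simp only [hk, Nat.add_sub_cancel, lptW_succ, le_refl, and_true]

lemma load_nonneg (A : ℕ → ℕ) (p : ℕ) : 0 ≤ I.load A p :=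
  sum_nonneg fun _ hi => (I.t_pos (mem_filter.mp hi).1).le

lemma t_le_load {A : ℕ → ℕ} {i : ℕ} (hi : i ∈ I.tasks) : I.t i ≤ I.load A (A i) :=
  single_le_sum (f := I.t) (fun _ hj => (I.t_pos (mem_filter.mp hj).1).le)
    (mem_filter.mpr ⟨hi, rfl⟩)

lemma load_div_le_makespan (A : ℕ → ℕ) {p : ℕ} (hp : p ∈ I.procs) :
    I.load A p / I.s p ≤ I.makespan A :=
  le_sup' (fun p => I.load A p / I.s p) hp

lemma makespan_nonneg (A : ℕ → ℕ) : 0 ≤ I.makespan A := by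
  have h1 : 1 ∈ I.procs := I.mem_procs.mpr ⟨le_rfl, I.hm⟩
  exact (div_nonneg (I.load_nonneg A 1) (I.s_pos h1).le).trans (I.load_div_le_makespan A h1)

lemma opt_le_makespan {A : ℕ → ℕ} (hA : I.IsSchedule A) : I.opt ≤ I.makespan A :=
  csInf_le ⟨0, fun _ ⟨A, _, hA⟩ => hA ▸ I.makespan_nonneg A⟩ ⟨A, hA, rfl⟩

lemma le_opt {r : ℝ} (h : ∀ A, I.IsSchedule A → r ≤ I.makespan A) : r ≤ I.opt :=
  le_csInf ⟨_, fun _ => 1, fun _ _ => I.mem_procs.mpr ⟨le_rfl, I.hm⟩, rfl⟩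
    fun _ ⟨A, hA, hr⟩ => hr ▸ h A hA

/-- The first task alone needs time `t 1 / s p` on whichever processor `p` runs it. -/
lemma opt_pos : 0 < I.opt := by
  have h1 : 1 ∈ I.tasks := I.mem_tasks.mpr ⟨le_rfl, I.hn⟩
  refine lt_of_lt_of_le ((lt_inf'_iff I.procs_nonempty).mpr fun p hp =>
    div_pos (I.t_pos h1) (I.s_pos hp)) (I.le_opt fun A hA => ?_)
  calc I.procs.inf' I.procs_nonempty (fun p => I.t 1 / I.s p)
      ≤ I.t 1 / I.s (A 1) := inf'_le _ (hA 1 h1)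
    _ ≤ I.load A (A 1) / I.s (A 1) := by gcongr; exacts [(I.s_pos (hA 1 h1)).le, I.t_le_load h1]
    _ ≤ I.makespan A := I.load_div_le_makespan A (hA 1 h1)

lemma isSchedule_lptA : I.IsSchedule I.lptA := fun i _ => (I.choose_spec _ i).1

lemma lptTime_pos : 0 < I.lptTime := by
  have hn : I.n ∈ I.tasks := I.mem_tasks.mpr ⟨I.hn, le_rfl⟩
  have hq := I.isSchedule_lptA I.n hn
  calc 0 < I.t I.n / I.s (I.lptA I.n) := div_pos (I.t_pos hn) (I.s_pos hq)
    _ ≤ I.load I.lptA (I.lptA I.n) / I.s (I.lptA I.n) := by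
      gcongr; exacts [(I.s_pos hq).le, I.t_le_load hn]
    _ ≤ I.lptTime := I.load_div_le_makespan _ hq

/-- If the workloads without the last task all finish before `LPT(I)`, the makespan is attained
where the last task went, and the greedy choice of that processor bounds it. -/
lemma lptTime_le_of_w'_div_lt (hw : ∀ q ∈ I.procs, I.w' q / I.s q < I.lptTime)
    {p : ℕ} (hp : p ∈ I.procs) : I.lptTime ≤ (I.w' p + I.t I.n) / I.s p := by
  obtain ⟨q, hq, hmax⟩ := exists_mem_eq_sup' I.procs_nonempty fun q => I.load I.lptA q / I.s q
  change I.lptTime = _ at hmax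
  have hlast : I.lptA I.n = q := by
    by_contra hne
    have := hw q hq
    rw [hmax, I.load_lptA_eq_w'_add, if_neg hne, add_zero] at this
    exact lt_irrefl _ this
  rw [hmax, I.load_lptA_eq_w'_add, if_pos hlast, ← hlast, I.w'_eq_lptW, I.w'_eq_lptW]
  exact I.cost_choose_le (I.lptW (I.n - 1)) I.n hp

def restrict (k : ℕ) (hk : 1 ≤ k) (hkn : k ≤ I.n) : SchedInstance where
  m := I.m
  n := k
  s := I.s
  t := I.t
  hm := I.hm
  hn := hk
  hs := I.hs
  ht i h1 h2 := I.ht i h1 (h2.trans hkn)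
  tsorted i j h1 h2 h3 := I.tsorted i j h1 h2 (h3.trans hkn)

section restrict

variable {k : ℕ} (hk : 1 ≤ k) (hkn : k ≤ I.n)

lemma lptW_restrict {j : ℕ} (hj : j ≤ k) : (I.restrict k hk hkn).lptW j = I.lptW j := by
  induction j with
  | zero => rfl
  | succ j ih =>
    funext p
    have hjJ : j + 1 ≤ (I.restrict k hk hkn).n := hj
    rw [lptW_succ, lptW_succ, ih (by omega)]
    simp only [hjJ, hj.trans hkn, and_true]
    rfl

lemma load_lptA_restrict (p : ℕ) :
    (I.restrict k hk hkn).load (I.restrict k hk hkn).lptA p = I.lptW k p := by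
  rw [load_lptA]
  exact congrFun (I.lptW_restrict hk hkn le_rfl) p

lemma opt_restrict_le : (I.restrict k hk hkn).opt ≤ I.opt := by
  set J := I.restrict k hk hkn
  refine I.le_opt fun A hA => (J.opt_le_makespan (A := A) fun i hi => ?_).trans ?_
  · exact hA i (I.mem_tasks.mpr ⟨(J.mem_tasks.mp hi).1, (J.mem_tasks.mp hi).2.trans hkn⟩)
  · refine sup'_le _ _ fun p hp => (div_le_div_of_nonneg_right ?_ (I.s_pos hp).le).trans
      (I.load_div_le_makespan A hp)
    refine sum_le_sum_of_subset_of_nonneg (filter_subset_filter _ (Icc_subset_Icc_right hkn)) ?_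
    exact fun i hi _ => (I.t_pos (mem_filter.mp hi).1).le

end restrict

lemma lptTime_restrict_lt (hmin : I.Minimal) {k : ℕ} (hk : 1 ≤ k) (hkn : k < I.n) :
    (I.restrict k hk hkn.le).lptTime < I.lptTime := by
  set J := I.restrict k hk hkn.le
  have hratio : J.ratio < I.ratio := hmin J le_rfl hkn.le fun h => hkn.ne h.2
  have hJopt := J.opt_pos
  have hIratio : 0 ≤ I.ratio := div_nonneg (I.makespan_nonneg _) I.opt_pos.le
  calc J.lptTime = J.ratio * J.opt := (div_mul_cancel₀ _ hJopt.ne').symm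
    _ < I.ratio * J.opt := by gcongr
    _ ≤ I.ratio * I.opt := by gcongr; exact I.opt_restrict_le hk hkn.le
    _ = I.lptTime := div_mul_cancel₀ _ I.opt_pos.ne'

lemma w'_div_lt_lptTime (hmin : I.Minimal) {p : ℕ} (hp : p ∈ I.procs) :
    I.w' p / I.s p < I.lptTime := by
  rcases I.hn.eq_or_lt with hn | hn
  · rw [I.w'_eq_lptW, ← hn]
    simpa [lptW] using I.lptTime_pos
  · set J := I.restrict (I.n - 1) (by omega) (by omega)
    calc I.w' p / I.s p = J.load J.lptA p / J.s p := by
          rw [I.load_lptA_restrict, ← w'_eq_lptW]; rfl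
      _ ≤ J.lptTime := J.load_div_le_makespan _ hp
      _ < I.lptTime := I.lptTime_restrict_lt hmin _ (by omega)

end SchedInstance

/-- Let `I` be a minimal normalized instance with `ρ_I > 1`. If
`s p > 1/(ρ_I − 1)` then `w'_I(p) > s p`; and if `s p ≥ 1/(ρ_I − 1)` then
`w'_I(p) ≥ s p`. -/
theorem w'_gt_s_of_fast (I : SchedInstance)
    (hnorm : I.Normalized) (hmin : I.Minimal) (hρ : 1 < I.ratio)
    (p : ℕ) (hp1 : 1 ≤ p) (hpm : p ≤ I.m) :
    (1 / (I.ratio - 1) < I.s p → I.s p < I.w' p) ∧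
    (1 / (I.ratio - 1) ≤ I.s p → I.s p ≤ I.w' p) := by
  obtain ⟨hopt, -, htn⟩ := hnorm
  have hp : p ∈ I.procs := I.mem_procs.mpr ⟨hp1, hpm⟩
  have hkey : I.ratio * I.s p ≤ I.w' p + 1 := by
    have h := I.lptTime_le_of_w'_div_lt (fun q hq => I.w'_div_lt_lptTime hmin hq) hp
    rwa [← htn, ← le_div_iff₀ (I.s_pos hp), SchedInstance.ratio, hopt, div_one]
  have hρ1 : 0 < I.ratio - 1 := sub_pos.mpr hρ
  constructor
  · intro h
    rw [div_lt_iff₀ hρ1] at h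
    linarith
  · intro h
    rw [div_le_iff₀ hρ1] at h
    linarith
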